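/- (Characterization of (p,q)-Appell sequences) A sequence (f_n)_{n≥0} of real polynomials with deg f_n = n is (p,q)-Appell if and only if there exists a sequence of real numbers (a_k)_{k≥0}, independent of n, with a_0 ≠ 0, such that f_n(x) = ∑_{k=0}^{n} [n choose k]_{p,q} p^{(n−k)(n−k−1)/2} a_k x^{n−k} for all n ≥ 0 and all x. -/

import Mathlib

noncomputable section
open Finset Polynomial

/-- The (p,q)-number `[n]_{p,q} = (p^n - q^n)/(p - q)`. -/
def pqNum (p q : ℝ) (n : ℕ) : ℝ := (p ^ n - q ^ n) / (p - q)

/-- The (p,q)-factorial `[n]_{p,q}! = ∏_{k=1}^n [k]_{p,q}`. -/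
def pqFact (p q : ℝ) (n : ℕ) : ℝ := ∏ k ∈ Finset.Icc 1 n, pqNum p q k

/-- The (p,q)-binomial coefficient. -/
def pqBinom (p q : ℝ) (n k : ℕ) : ℝ := pqFact p q n / (pqFact p q k * pqFact p q (n - k))

/-- The (p,q)-derivative on polynomials: the linear operator with `D(X^n) = [n]_{p,q} X^(n-1)`. -/
def pqDeriv (p q : ℝ) (f : Polynomial ℝ) : Polynomial ℝ :=
  f.sum fun n a => Polynomial.C (a * pqNum p q n) * Polynomial.X ^ (n - 1)

/-- The (p,q)-derivative on formal power series, acting coefficientwise by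
`D(X^n) = [n]_{p,q} X^(n-1)`. -/
def pqDerivPS (p q : ℝ) (f : PowerSeries ℝ) : PowerSeries ℝ :=
  PowerSeries.mk fun n => pqNum p q (n + 1) * PowerSeries.coeff (n + 1) f

/-- The double (p,q)-factorial `[2m]_{p,q}!! = ∏_{k=1}^m [2k]_{p,q}`. -/
def pqDoubleFact (p q : ℝ) (m : ℕ) : ℝ := ∏ k ∈ Finset.Icc 1 m, pqNum p q (2 * k)

/-- A sequence of real polynomials of exact degree `n` is (p,q)-Appell when
`D_{p,q} f_{n+1}(x) = [n+1]_{p,q} f_n(p x)` for all `n ≥ 0` and all `x`. -/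
def IsPQAppell (p q : ℝ) (f : ℕ → Polynomial ℝ) : Prop :=
  (∀ n, (f n).natDegree = n) ∧
    ∀ (n : ℕ) (x : ℝ), (pqDeriv p q (f (n + 1))).eval x = pqNum p q (n + 1) * (f n).eval (p * x)

/-!
The (p,q)-derivative lowers degrees by one and annihilates only the constants, so a
(p,q)-Appell sequence is determined by its constant terms `a n = f n (0)`. Conversely, for
every `a` the polynomials `∑ [n choose k] p^(T(n-k)) a_k x^(n-k)`, with `T j = j(j-1)/2`,
form a (p,q)-Appell sequence: this is the identity `[n+1 choose k] [n+1-k] = [n+1] [n choose k]`,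
together with `T(j+1) = T(j) + j`, which absorbs the dilation `x ↦ p x`. Finally `a 0` is the
leading coefficient of `f 1`, hence nonzero.
-/

lemma pqNum_zero (p q : ℝ) : pqNum p q 0 = 0 := by simp [pqNum]

lemma pqFact_zero (p q : ℝ) : pqFact p q 0 = 1 := by simp [pqFact]

lemma pqFact_succ (p q : ℝ) (n : ℕ) : pqFact p q (n + 1) = pqFact p q n * pqNum p q (n + 1) :=
  Finset.prod_Icc_succ_top (by omega) _

section
variable {p q : ℝ}

lemma pqNum_pos (hq : 0 ≤ q) (hpq : q < p) {n : ℕ} (hn : n ≠ 0) : 0 < pqNum p q n :=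
  div_pos (sub_pos.mpr (pow_lt_pow_left₀ hpq hq hn)) (sub_pos.mpr hpq)

lemma pqFact_pos (hq : 0 ≤ q) (hpq : q < p) (n : ℕ) : 0 < pqFact p q n :=
  Finset.prod_pos fun k hk => pqNum_pos hq hpq (by grind)

lemma pqBinom_zero_right (hq : 0 ≤ q) (hpq : q < p) (n : ℕ) : pqBinom p q n 0 = 1 := by
  rw [pqBinom, pqFact_zero, one_mul, Nat.sub_zero, div_self (pqFact_pos hq hpq n).ne']

lemma pqBinom_self (hq : 0 ≤ q) (hpq : q < p) (n : ℕ) : pqBinom p q n n = 1 := by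
  rw [pqBinom, Nat.sub_self, pqFact_zero, mul_one, div_self (pqFact_pos hq hpq n).ne']

lemma pqBinom_succ_mul_pqNum (hq : 0 ≤ q) (hpq : q < p) (k j : ℕ) :
    pqBinom p q (k + j + 1) k * pqNum p q (j + 1)
      = pqNum p q (k + j + 1) * pqBinom p q (k + j) k := by
  have := (pqFact_pos hq hpq k).ne'
  have := (pqFact_pos hq hpq j).ne'
  have := (pqNum_pos hq hpq j.succ_ne_zero).ne'
  rw [pqBinom, pqBinom, add_assoc, Nat.add_sub_cancel_left, Nat.add_sub_cancel_left, ← add_assoc,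
    pqFact_succ, pqFact_succ]
  field_simp

end

section pqDeriv
variable (p q : ℝ)

lemma pqDeriv_add (f g : ℝ[X]) : pqDeriv p q (f + g) = pqDeriv p q f + pqDeriv p q g :=
  sum_add_index _ _ _ (by simp) fun _ _ _ => by rw [add_mul, C_add, add_mul]

lemma pqDeriv_sum {ι : Type*} (s : Finset ι) (F : ι → ℝ[X]) :
    pqDeriv p q (∑ i ∈ s, F i) = ∑ i ∈ s, pqDeriv p q (F i) :=
  map_sum (AddMonoidHom.mk' (pqDeriv p q) (pqDeriv_add p q)) F s

lemma pqDeriv_C_mul_X_pow (c : ℝ) (m : ℕ) :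
    pqDeriv p q (C c * X ^ m) = C (c * pqNum p q m) * X ^ (m - 1) := by
  rw [C_mul_X_pow_eq_monomial, pqDeriv, sum_monomial_index]
  simp

lemma coeff_pqDeriv (f : ℝ[X]) (m : ℕ) :
    (pqDeriv p q f).coeff m = f.coeff (m + 1) * pqNum p q (m + 1) := by
  induction f using Polynomial.induction_on' with
  | add f g hf hg => rw [pqDeriv_add, coeff_add, hf, hg, coeff_add, add_mul]
  | monomial n c =>
    rw [← C_mul_X_pow_eq_monomial, pqDeriv_C_mul_X_pow]
    rcases n with _ | n
    · simp [pqNum_zero]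
    · simp only [coeff_C_mul, coeff_X_pow, Nat.add_sub_cancel, add_left_inj]
      split_ifs <;> simp_all

variable {p q}

lemma eq_of_pqDeriv_eq (hq : 0 ≤ q) (hpq : q < p) {f g : ℝ[X]}
    (hD : pqDeriv p q f = pqDeriv p q g) (h0 : f.coeff 0 = g.coeff 0) : f = g := by
  ext (_ | m)
  · exact h0
  · have := congrArg (coeff · m) hD
    simp only [coeff_pqDeriv] at this
    exact mul_right_cancel₀ (pqNum_pos hq hpq m.succ_ne_zero).ne' this

end pqDeriv

def pqAppellPoly (p q : ℝ) (a : ℕ → ℝ) (n : ℕ) : ℝ[X] :=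
  ∑ k ∈ Finset.range (n + 1),
    C (pqBinom p q n k * p ^ ((n - k) * (n - k - 1) / 2) * a k) * X ^ (n - k)

section pqAppellPoly
variable {p q : ℝ} (a : ℕ → ℝ)

lemma eval_pqAppellPoly (n : ℕ) (x : ℝ) :
    (pqAppellPoly p q a n).eval x = ∑ k ∈ Finset.range (n + 1),
      pqBinom p q n k * p ^ ((n - k) * (n - k - 1) / 2) * a k * x ^ (n - k) := by
  simp [pqAppellPoly, eval_finsetSum]

lemma coeff_zero_pqAppellPoly (hq : 0 ≤ q) (hpq : q < p) (n : ℕ) :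
    (pqAppellPoly p q a n).coeff 0 = a n := by
  rw [coeff_zero_eq_eval_zero, eval_pqAppellPoly, Finset.sum_eq_single_of_mem n
    (Finset.self_mem_range_succ n)]
  · simp [pqBinom_self hq hpq]
  · intro k hk hkn
    simp [zero_pow (show n - k ≠ 0 by grind)]

lemma pqAppellPoly_one (hq : 0 ≤ q) (hpq : q < p) :
    pqAppellPoly p q a 1 = C (a 0) * X + C (a 1) := by
  simp [pqAppellPoly, Finset.sum_range_succ, pqBinom_zero_right hq hpq, pqBinom_self hq hpq]

lemma eval_pqDeriv_pqAppellPoly (hq : 0 ≤ q) (hpq : q < p) (n : ℕ) (x : ℝ) :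
    (pqDeriv p q (pqAppellPoly p q a (n + 1))).eval x
      = pqNum p q (n + 1) * (pqAppellPoly p q a n).eval (p * x) := by
  rw [pqAppellPoly, pqDeriv_sum, eval_finsetSum, Finset.sum_range_succ, eval_pqAppellPoly,
    Finset.mul_sum]
  simp only [pqDeriv_C_mul_X_pow, eval_mul, eval_C, eval_pow, eval_X, Nat.sub_self, pqNum_zero,
    mul_zero, zero_mul, add_zero]
  refine Finset.sum_congr rfl fun k hk => ?_
  have hk : k ≤ n := Finset.mem_range_succ_iff.mp hk
  obtain ⟨j, rfl⟩ := Nat.exists_eq_add_of_le hk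
  have hj : k + j + 1 - k = j + 1 := by omega
  rw [Nat.add_sub_cancel_left, hj, Nat.triangle_succ, Nat.add_sub_cancel, pow_add, mul_pow]
  linear_combination p ^ (j * (j - 1) / 2) * p ^ j * a k * x ^ j * pqBinom_succ_mul_pqNum hq hpq k j

lemma eq_pqAppellPoly_of_appell (hq : 0 ≤ q) (hpq : q < p) {f : ℕ → ℝ[X]}
    (hdeg : (f 0).natDegree = 0)
    (hf : ∀ (n : ℕ) (x : ℝ),
      (pqDeriv p q (f (n + 1))).eval x = pqNum p q (n + 1) * (f n).eval (p * x))
    (n : ℕ) : f n = pqAppellPoly p q (fun k => (f k).coeff 0) n := by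
  induction n with
  | zero => rw [eq_C_of_natDegree_eq_zero hdeg]; simp [pqAppellPoly, pqBinom_self hq hpq]
  | succ n ih =>
    refine eq_of_pqDeriv_eq hq hpq (Polynomial.funext fun x => ?_) ?_
    · rw [hf, eval_pqDeriv_pqAppellPoly _ hq hpq, ← ih]
    · rw [coeff_zero_pqAppellPoly _ hq hpq]

end pqAppellPoly

/-- a sequence of polynomials of exact degrees is (p,q)-Appell iff its members
admit an expansion with coefficients independent of n. -/
theorem pq_appell_characterization (p q : ℝ) (hq : 0 < q) (hpq : q < p)
    (f : ℕ → Polynomial ℝ) (hdeg : ∀ n, (f n).natDegree = n) :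
    (∀ (n : ℕ) (x : ℝ),
        (pqDeriv p q (f (n + 1))).eval x = pqNum p q (n + 1) * (f n).eval (p * x))
      ↔ ∃ a : ℕ → ℝ, a 0 ≠ 0 ∧ ∀ (n : ℕ) (x : ℝ),
          (f n).eval x = ∑ k ∈ Finset.range (n + 1),
            pqBinom p q n k * p ^ ((n - k) * (n - k - 1) / 2) * a k * x ^ (n - k) := by
  constructor
  · intro hAppell
    have hf := eq_pqAppellPoly_of_appell hq.le hpq (hdeg 0) hAppell
    refine ⟨fun k => (f k).coeff 0, fun ha0 => ?_, fun n x => by rw [hf n, eval_pqAppellPoly]⟩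
    simp only at ha0
    have h1 := hdeg 1
    rw [hf 1, pqAppellPoly_one _ hq.le hpq, ha0, C_0, zero_mul, zero_add, natDegree_C] at h1
    exact zero_ne_one h1
  · rintro ⟨a, -, hexp⟩ n x
    have hf (n : ℕ) : f n = pqAppellPoly p q a n :=
      Polynomial.funext fun x => by rw [hexp, eval_pqAppellPoly]
    rw [hf, hf, eval_pqDeriv_pqAppellPoly a hq.le hpq]
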